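/- arXiv:0903.3179 — 3 statements merged into one kernel-verified Lean document; each statement's English description precedes it below -/
import Mathlib

section
/- For simple random walk on ℤ (dimension d = 1), there exist constants c₁ > 0 and C₁ > 0 such that for all n ∈ ℕ with n ≥ 2, the Shannon entropy of the range satisfies c₁ · log n ≤ H(R(n)) ≤ C₁ · log n. -/
open Real

/-- A single step of the simple random walk on `ℤ^d`: the pair `(i, b)` encodes a move by
`+eᵢ` (if `b = true`) or `-eᵢ` (if `b = false`).  The uniform distribution on `Fin d × Bool`
corresponds to the uniform distribution on the `2d` unit vectors. -/
def step {d : ℕ} (a : Fin d × Bool) : Fin d → ℤ :=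
  fun j => if j = a.1 then (if a.2 then 1 else -1) else 0

/-- The position `S(k)` of the walk started at `z` after `k` steps, driven by the
sequence of i.i.d. uniform steps `ω : Fin n → Fin d × Bool` (meaningful for `k ≤ n`). -/
def walk {d n : ℕ} (z : Fin d → ℤ) (ω : Fin n → Fin d × Bool) (k : ℕ) : Fin d → ℤ :=
  z + ∑ i ∈ Finset.univ.filter (fun i : Fin n => (i : ℕ) < k), step (ω i)

/-- Probability of an event for the `n`-step simple random walk on `ℤ^d`:
the driving step sequences are uniform among the `(2d)^n` possibilities. -/
noncomputable def prW (d n : ℕ) (E : Set (Fin n → Fin d × Bool)) : ℝ :=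
  E.ncard / (2 * d) ^ n

/-- Expectation of a random variable of the `n`-step simple random walk on `ℤ^d`. -/
noncomputable def exW (d n : ℕ) (f : (Fin n → Fin d × Bool) → ℝ) : ℝ :=
  (∑ ω : Fin n → Fin d × Bool, f ω) / (2 * d) ^ n

/-- Shannon entropy (base 2) of a random variable `X` of the `n`-step walk:
`H(X) = ∑ₐ -P[X = a] · log₂ P[X = a]`. -/
noncomputable def entW {α : Type*} (d n : ℕ) (X : (Fin n → Fin d × Bool) → α) : ℝ :=
  ∑' a : α, -(prW d n {ω | X ω = a} * logb 2 (prW d n {ω | X ω = a}))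

/-- The range `R(n) = {S(0), …, S(n)}` of the `n`-step walk started at `z`. -/
def rangeW {d n : ℕ} (z : Fin d → ℤ) (ω : Fin n → Fin d × Bool) : Finset (Fin d → ℤ) :=
  (Finset.range (n + 1)).image (walk z ω)

/-- The inner boundary `∂A` of a finite set `A ⊆ ℤ^d`: the points of `A` adjacent
(at graph distance 1, i.e. reachable by a single step) to some vertex of the complement. -/
def innerBdry {d : ℕ} (A : Finset (Fin d → ℤ)) : Finset (Fin d → ℤ) :=
  A.filter fun x => ∃ a : Fin d × Bool, x + step a ∉ A

/-- The Euclidean (`L²`) norm on `ℤ^d`. -/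
noncomputable def eNorm {d : ℕ} (x : Fin d → ℤ) : ℝ :=
  Real.sqrt (∑ i, ((x i : ℝ)) ^ 2)

/-!
The range of the walk is an integer interval `[a, b]` with `-n ≤ a ≤ 0 ≤ b ≤ n`, so it takes at
most `(n + 1)²` values and its entropy is at most `log₂ (n + 1)² ≤ 4 log₂ n`.

Conversely, the range determines the maximum `M ≥ 0` of the walk, and by the reflection principle
`P(max = M) = P(S(n) = M) + P(S(n) = M + 1)`. Either event fixes the number of up-steps to
`⌊(n + M + 1) / 2⌋`, so this is at most `C(n, ⌊n/2⌋) / 2ⁿ ≤ n^(-1/2)`. Every value of the range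
thus has probability at most `n^(-1/2)`, and the entropy is at least `½ log₂ n`.
-/

open Finset

namespace Real

theorem sum_negMulLog_le_log_card {ι : Type*} (s : Finset ι) (p : ι → ℝ)
    (hp₀ : ∀ i ∈ s, 0 ≤ p i) (hp₁ : ∑ i ∈ s, p i = 1) :
    ∑ i ∈ s, negMulLog (p i) ≤ log #s := by
  have hs : (0 : ℝ) < #s := by
    rcases s.eq_empty_or_nonempty with rfl | hne
    · simp at hp₁
    · exact_mod_cast hne.card_pos
  have jensen := concaveOn_negMulLog.le_map_sum (t := s) (w := fun _ => (#s : ℝ)⁻¹) (p := p)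
    (fun _ _ => by positivity) (by simp [hs.ne']) hp₀
  simp only [smul_eq_mul, ← mul_sum, hp₁, mul_one] at jensen
  rw [negMulLog, log_inv] at jensen
  have := mul_le_mul_of_nonneg_left jensen hs.le
  field_simp at this
  linarith

theorem neg_log_le_sum_negMulLog {ι : Type*} (s : Finset ι) (p : ι → ℝ) {q : ℝ}
    (hp₀ : ∀ i ∈ s, 0 ≤ p i) (hpq : ∀ i ∈ s, p i ≤ q) (hp₁ : ∑ i ∈ s, p i = 1) :
    -log q ≤ ∑ i ∈ s, negMulLog (p i) := by
  calc -log q = ∑ i ∈ s, p i * -log q := by rw [← sum_mul, hp₁, one_mul]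
    _ ≤ ∑ i ∈ s, negMulLog (p i) := sum_le_sum fun i hi => by
      rcases (hp₀ i hi).eq_or_lt with h | h
      · simp [← h]
      · rw [negMulLog, neg_mul, mul_neg]
        exact neg_le_neg (mul_le_mul_of_nonneg_left (log_le_log h (hpq i hi)) h.le)

end Real

section Entropy

variable {α : Type*} {d n : ℕ}

theorem prW_fiber_eq [DecidableEq α] (X : (Fin n → Fin d × Bool) → α) (a : α) :
    prW d n {ω | X ω = a} = #{ω | X ω = a} / (2 * d : ℝ) ^ n := by
  rw [prW, Set.ncard_eq_toFinset_card', Set.toFinset_ofPred]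

theorem sum_prW_fiber (hd : 0 < d) [DecidableEq α] (X : (Fin n → Fin d × Bool) → α) :
    ∑ a ∈ univ.image X, prW d n {ω | X ω = a} = 1 := by
  have hcard : (#(univ : Finset (Fin n → Fin d × Bool)) : ℝ) = (2 * d) ^ n := by
    simp [card_univ, mul_comm]
  simp_rw [prW_fiber_eq, ← sum_div]
  rw [← Nat.cast_sum, ← card_eq_sum_card_image, hcard, div_self (by positivity)]

theorem entW_eq_sum_negMulLog [DecidableEq α] (X : (Fin n → Fin d × Bool) → α) :
    entW d n X = (∑ a ∈ univ.image X, negMulLog (prW d n {ω | X ω = a})) / log 2 := by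
  rw [entW, tsum_eq_sum (s := univ.image X), sum_div]
  · refine sum_congr rfl fun a _ => ?_
    rw [negMulLog, logb]
    ring
  · intro a ha
    have : {ω | X ω = a} = ∅ := Set.eq_empty_of_forall_notMem fun ω hω =>
      ha (mem_image.mpr ⟨ω, mem_univ ω, hω⟩)
    simp [this, prW]

theorem entW_le_logb_card (hd : 0 < d) [DecidableEq α] (X : (Fin n → Fin d × Bool) → α) :
    entW d n X ≤ logb 2 #(univ.image X) := by
  rw [entW_eq_sum_negMulLog, logb]
  gcongr
  exact sum_negMulLog_le_log_card _ _ (fun a _ => by rw [prW]; positivity) (sum_prW_fiber hd X)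

theorem logb_le_entW (hd : 0 < d) {N : ℝ} (X : (Fin n → Fin d × Bool) → α)
    (hX : ∀ a, prW d n {ω | X ω = a} ≤ N⁻¹) : logb 2 N ≤ entW d n X := by
  classical
  rw [entW_eq_sum_negMulLog, logb, ← neg_neg (log N), ← log_inv]
  gcongr
  exact neg_log_le_sum_negMulLog _ _ (fun a _ => by rw [prW]; positivity) (fun a _ => hX a)
    (sum_prW_fiber hd X)

end Entropy

theorem Nat.centralBinom_sq_mul_le (m : ℕ) : m.centralBinom ^ 2 * (2 * m + 1) ≤ 16 ^ m := by
  induction m with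
  | zero => simp
  | succ m ih =>
    refine Nat.le_of_mul_le_mul_left ?_ (by positivity : 0 < (m + 1) ^ 2)
    calc (m + 1) ^ 2 * ((m + 1).centralBinom ^ 2 * (2 * (m + 1) + 1))
        = ((m + 1) * (m + 1).centralBinom) ^ 2 * (2 * m + 3) := by ring
      _ = (2 * m + 1) * (2 * m + 3) * (4 * (m.centralBinom ^ 2 * (2 * m + 1))) := by
        rw [Nat.succ_mul_centralBinom_succ]; ring
      _ ≤ (2 * m + 2) * (2 * m + 2) * (4 * 16 ^ m) :=
        Nat.mul_le_mul (by nlinarith) (Nat.mul_le_mul_left 4 ih)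
      _ = (m + 1) ^ 2 * 16 ^ (m + 1) := by ring

theorem Nat.choose_half_sq_mul_le (n : ℕ) : n.choose (n / 2) ^ 2 * n ≤ 4 ^ n := by
  obtain ⟨m, rfl | rfl⟩ := n.even_or_odd'
  · rw [Nat.mul_div_cancel_left m two_pos, ← Nat.centralBinom_eq_two_mul_choose, pow_mul]
    exact (Nat.mul_le_mul_left _ (by omega)).trans (Nat.centralBinom_sq_mul_le m)
  · have hhalf : (2 * m + 1) / 2 = m := by omega
    have hpascal : (2 * m + 1).choose m ≤ 2 * m.centralBinom := by
      rcases m with _ | m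
      · simp
      · rw [Nat.choose_succ_succ']
        exact (add_le_add (Nat.choose_le_centralBinom _ _)
          (Nat.choose_le_centralBinom _ _)).trans_eq (two_mul _).symm
    rw [hhalf]
    calc (2 * m + 1).choose m ^ 2 * (2 * m + 1) ≤ (2 * m.centralBinom) ^ 2 * (2 * m + 1) := by
          gcongr
      _ = 4 * (m.centralBinom ^ 2 * (2 * m + 1)) := by ring
      _ ≤ 4 * 16 ^ m := by gcongr; exact Nat.centralBinom_sq_mul_le m
      _ = 4 ^ (2 * m + 1) := by rw [pow_succ, pow_mul]; norm_num; ring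

theorem Nat.choose_half_le_two_pow_div_sqrt {n : ℕ} (hn : 0 < n) :
    (n.choose (n / 2) : ℝ) ≤ 2 ^ n / √n := by
  have hsq : ((n.choose (n / 2) : ℝ) * √n) ^ 2 ≤ ((2 : ℝ) ^ n) ^ 2 := by
    rw [mul_pow, sq_sqrt n.cast_nonneg, ← pow_mul, mul_comm n 2, pow_mul]
    exact_mod_cast Nat.choose_half_sq_mul_le n
  rw [le_div_iff₀ (by positivity)]
  exact (pow_le_pow_iff_left₀ (by positivity) (by positivity) two_ne_zero).1 hsq

theorem exists_eq_of_abs_succ_sub_le_one {f : ℕ → ℤ} (hf : ∀ k, |f (k + 1) - f k| ≤ 1)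
    {a b : ℕ} (hab : a ≤ b) {c : ℤ} (ha : f a ≤ c) (hb : c ≤ f b) :
    ∃ k, a ≤ k ∧ k ≤ b ∧ f k = c := by
  induction b, hab using Nat.le_induction with
  | base => exact ⟨a, le_rfl, le_rfl, le_antisymm ha hb⟩
  | succ b hab ih =>
    rcases le_or_gt c (f b) with h | h
    · obtain ⟨k, hak, hkb, hk⟩ := ih h
      exact ⟨k, hak, hkb.trans b.le_succ, hk⟩
    · refine ⟨b + 1, hab.trans b.le_succ, le_rfl, ?_⟩
      have := abs_le.mp (hf b)
      omega

namespace SRW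

abbrev Steps (n : ℕ) := Fin n → Fin 1 × Bool

variable {n : ℕ}

def stepSign (a : Fin 1 × Bool) : ℤ := if a.2 then 1 else -1

def reverseStep (a : Fin 1 × Bool) : Fin 1 × Bool := (a.1, !a.2)

theorem abs_stepSign (a : Fin 1 × Bool) : |stepSign a| = 1 := by
  cases h : a.2 <;> simp [stepSign, h]

theorem stepSign_reverseStep (a : Fin 1 × Bool) : stepSign (reverseStep a) = -stepSign a := by
  cases h : a.2 <;> simp [stepSign, reverseStep, h]

/-- `S(k)` for the walk started at `0`, frozen at `S(n)` for `k ≥ n`. -/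
def position (ω : Steps n) (k : ℕ) : ℤ :=
  ∑ i ∈ univ.filter (fun i : Fin n => (i : ℕ) < k), stepSign (ω i)

theorem walk_zero_eq (ω : Steps n) (k : ℕ) :
    walk 0 ω k = Function.const (Fin 1) (position ω k) := by
  funext j
  simp only [walk, position, Pi.add_apply, Pi.zero_apply, zero_add, Finset.sum_apply,
    Function.const_apply]
  refine sum_congr rfl fun i _ => ?_
  simp [step, stepSign, Subsingleton.elim j (ω i).1]

theorem position_zero (ω : Steps n) : position ω 0 = 0 := by
  simp [position]

theorem abs_position_succ_sub_le_one (ω : Steps n) (k : ℕ) :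
    |position ω (k + 1) - position ω k| ≤ 1 := by
  rcases lt_or_ge k n with hk | hk
  · have hsplit : univ.filter (fun i : Fin n => (i : ℕ) < k + 1) =
        insert ⟨k, hk⟩ (univ.filter (fun i : Fin n => (i : ℕ) < k)) := by
      ext i
      simp only [mem_filter, mem_univ, true_and, mem_insert, Fin.ext_iff]
      omega
    rw [position, hsplit, sum_insert (by simp), position, add_sub_cancel_right, abs_stepSign]
  · have hsame : univ.filter (fun i : Fin n => (i : ℕ) < k + 1) =
        univ.filter (fun i : Fin n => (i : ℕ) < k) := by
      ext i
      simp only [mem_filter, mem_univ, true_and]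
      omega
    simp only [position, hsame, sub_self, abs_zero, zero_le_one]

theorem abs_position_le (ω : Steps n) (k : ℕ) : |position ω k| ≤ n := by
  calc |position ω k| ≤ ∑ i ∈ univ.filter (fun i : Fin n => (i : ℕ) < k), |stepSign (ω i)| :=
        abs_sum_le_sum_abs _ _
    _ ≤ ∑ _ : Fin n, (1 : ℤ) := by
      simp only [abs_stepSign]
      exact sum_le_sum_of_subset_of_nonneg (filter_subset _ univ) fun _ _ _ => zero_le_one
    _ = n := by simp

def visited (ω : Steps n) : Finset ℤ := (range (n + 1)).image (position ω)

theorem mem_visited {ω : Steps n} {c : ℤ} :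
    c ∈ visited ω ↔ ∃ k ≤ n, position ω k = c := by
  simp [visited]

theorem zero_mem_visited (ω : Steps n) : 0 ∈ visited ω :=
  mem_visited.2 ⟨0, n.zero_le, position_zero ω⟩

theorem rangeW_zero_eq (ω : Steps n) :
    rangeW 0 ω = (visited ω).image (Function.const (Fin 1)) := by
  rw [rangeW, visited, image_image]
  exact image_congr fun k _ => walk_zero_eq ω k

theorem rangeW_zero_eq_iff {ω ω' : Steps n} :
    rangeW 0 ω = rangeW 0 ω' ↔ visited ω = visited ω' := by
  rw [rangeW_zero_eq, rangeW_zero_eq,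
    (image_injective (Function.const_injective (α := Fin 1) (β := ℤ))).eq_iff]

theorem mem_visited_of_le_of_le {ω : Steps n} {j k : ℕ} (hj : j ≤ n) (hk : k ≤ n)
    {c : ℤ} (hjc : position ω j ≤ c) (hck : c ≤ position ω k) : c ∈ visited ω := by
  rcases le_total j k with hjk | hkj
  · obtain ⟨i, -, hik, hi⟩ :=
      exists_eq_of_abs_succ_sub_le_one (abs_position_succ_sub_le_one ω) hjk hjc hck
    exact mem_visited.2 ⟨i, hik.trans hk, hi⟩
  · obtain ⟨i, -, hij, hi⟩ := exists_eq_of_abs_succ_sub_le_one (f := fun k => -position ω k)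
      (fun k => by rw [neg_sub_neg, abs_sub_comm]; exact abs_position_succ_sub_le_one ω k)
      hkj (neg_le_neg hck) (neg_le_neg hjc)
    exact mem_visited.2 ⟨i, hij.trans hj, neg_inj.1 hi⟩

theorem exists_visited_eq_Icc (ω : Steps n) :
    ∃ a ∈ Icc (-n : ℤ) 0, ∃ b ∈ Icc 0 (n : ℤ), visited ω = Icc a b := by
  have hne : (visited ω).Nonempty := ⟨0, zero_mem_visited ω⟩
  have hbound : ∀ c ∈ visited ω, c ∈ Icc (-n : ℤ) n := fun c hc => by
    obtain ⟨k, -, rfl⟩ := mem_visited.1 hc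
    exact mem_Icc.2 (abs_le.1 (abs_position_le ω k))
  obtain ⟨j, hj, hja⟩ := mem_visited.1 ((visited ω).min'_mem hne)
  obtain ⟨k, hk, hkb⟩ := mem_visited.1 ((visited ω).max'_mem hne)
  refine ⟨_, mem_Icc.2 ⟨(mem_Icc.1 (hbound _ (min'_mem _ hne))).1,
      min'_le _ _ (zero_mem_visited ω)⟩,
    _, mem_Icc.2 ⟨le_max' _ _ (zero_mem_visited ω), (mem_Icc.1 (hbound _ (max'_mem _ hne))).2⟩,
    ?_⟩
  ext c
  refine ⟨fun hc => mem_Icc.2 ⟨min'_le _ _ hc, le_max' _ _ hc⟩, fun hc => ?_⟩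
  exact mem_visited_of_le_of_le hj hk (hja.trans_le (mem_Icc.1 hc).1)
    ((mem_Icc.1 hc).2.trans_eq hkb.symm)

theorem card_image_rangeW_le :
    #(univ.image (rangeW 0 : Steps n → Finset (Fin 1 → ℤ))) ≤ (n + 1) ^ 2 := by
  calc _ ≤ #((Icc (-n : ℤ) 0 ×ˢ Icc 0 (n : ℤ)).image
          fun p => (Icc p.1 p.2).image (Function.const (Fin 1))) := by
        refine card_le_card (image_subset_iff.2 fun ω _ => ?_)
        obtain ⟨a, ha, b, hb, hab⟩ := exists_visited_eq_Icc ω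
        exact mem_image.2 ⟨(a, b), mem_product.2 ⟨ha, hb⟩, by rw [rangeW_zero_eq, hab]⟩
    _ ≤ #(Icc (-n : ℤ) 0 ×ˢ Icc 0 (n : ℤ)) := card_image_le
    _ = (n + 1) ^ 2 := by
        rw [card_product, Int.card_Icc, Int.card_Icc, sq]
        congr 1
        omega

theorem mem_visited_of_le_position {ω : Steps n} {M : ℤ} {k : ℕ} (hM : 0 ≤ M)
    (hk : k ≤ n) (h : M ≤ position ω k) : M ∈ visited ω :=
  mem_visited_of_le_of_le n.zero_le hk (by rwa [position_zero]) h

def reflectFrom (t : ℕ) (ω : Steps n) : Steps n :=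
  fun i => if (i : ℕ) < t then ω i else reverseStep (ω i)

theorem reflectFrom_reflectFrom (t : ℕ) (ω : Steps n) :
    reflectFrom t (reflectFrom t ω) = ω := by
  funext i
  by_cases hi : (i : ℕ) < t <;> simp [reflectFrom, reverseStep, hi]

theorem position_reflectFrom_of_le {t k : ℕ} (ω : Steps n) (hk : k ≤ t) :
    position (reflectFrom t ω) k = position ω k :=
  sum_congr rfl fun i hi => by rw [reflectFrom, if_pos ((mem_filter.1 hi).2.trans_le hk)]

theorem position_eq_position_add_sum {t k : ℕ} (ω : Steps n) (htk : t ≤ k) :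
    position ω k =
      position ω t + ∑ i ∈ univ.filter (fun i : Fin n => t ≤ (i : ℕ) ∧ (i : ℕ) < k),
        stepSign (ω i) := by
  rw [position, ← sum_filter_add_sum_filter_not _ (fun i : Fin n => (i : ℕ) < t), filter_filter,
    filter_filter, position]
  congr 2 <;> ext i <;> simp only [mem_filter, mem_univ, true_and] <;> omega

theorem position_reflectFrom_of_ge {t k : ℕ} (ω : Steps n) (htk : t ≤ k) :
    position (reflectFrom t ω) k = 2 * position ω t - position ω k := by
  have htail : ∑ i ∈ univ.filter (fun i : Fin n => t ≤ (i : ℕ) ∧ (i : ℕ) < k),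
      stepSign (reflectFrom t ω i) =
      -∑ i ∈ univ.filter (fun i : Fin n => t ≤ (i : ℕ) ∧ (i : ℕ) < k), stepSign (ω i) := by
    rw [← sum_neg_distrib]
    refine sum_congr rfl fun i hi => ?_
    rw [reflectFrom, if_neg (not_lt.2 (mem_filter.1 hi).2.1), stepSign_reverseStep]
  rw [position_eq_position_add_sum _ htk, htail, position_reflectFrom_of_le ω le_rfl,
    position_eq_position_add_sum ω htk]
  ring

/-- The hitting time of `M`, or `n + 1` if the walk does not visit `M` by time `n`. -/
noncomputable def hitTime (M : ℤ) (ω : Steps n) : ℕ :=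
  Nat.find (⟨n + 1, Or.inr n.lt_succ_self⟩ : ∃ k, position ω k = M ∨ n < k)

theorem hitTime_le {M : ℤ} {ω : Steps n} (hM : M ∈ visited ω) :
    hitTime M ω ≤ n := by
  obtain ⟨k, hk, hkM⟩ := mem_visited.1 hM
  exact (Nat.find_le (Or.inl hkM)).trans hk

theorem position_hitTime {M : ℤ} {ω : Steps n} (hM : M ∈ visited ω) :
    position ω (hitTime M ω) = M :=
  (Nat.find_spec (⟨n + 1, Or.inr n.lt_succ_self⟩ : ∃ k, position ω k = M ∨ n < k)
    ).resolve_right (not_lt.2 (hitTime_le hM))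

theorem position_ne_of_lt_hitTime {M : ℤ} {ω : Steps n} {k : ℕ}
    (hk : k < hitTime M ω) :
    position ω k ≠ M := fun h => Nat.find_min _ hk (Or.inl h)

theorem hitTime_reflectFrom_hitTime {M : ℤ} {ω : Steps n} (hM : M ∈ visited ω) :
    hitTime M (reflectFrom (hitTime M ω) ω) = hitTime M ω := by
  refine (Nat.find_eq_iff _).2 ⟨Or.inl ?_, fun k hk => not_or.2 ⟨?_, ?_⟩⟩
  · rw [position_reflectFrom_of_le ω le_rfl, position_hitTime hM]
  · rw [position_reflectFrom_of_le ω hk.le]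
    exact position_ne_of_lt_hitTime hk
  · exact not_lt.2 (hk.le.trans (hitTime_le hM))

noncomputable def reflectAtHit (M : ℤ) (ω : Steps n) : Steps n :=
  reflectFrom (hitTime M ω) ω

section reflectAtHit

variable {M : ℤ} {ω : Steps n}

theorem position_reflectAtHit (hM : M ∈ visited ω) :
    position (reflectAtHit M ω) n = 2 * M - position ω n := by
  rw [reflectAtHit, position_reflectFrom_of_ge ω (hitTime_le hM), position_hitTime hM]

theorem mem_visited_reflectAtHit (hM : M ∈ visited ω) : M ∈ visited (reflectAtHit M ω) :=
  mem_visited.2 ⟨hitTime M ω, hitTime_le hM,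
    by rw [reflectAtHit, position_reflectFrom_of_le ω le_rfl, position_hitTime hM]⟩

theorem reflectAtHit_reflectAtHit (hM : M ∈ visited ω) :
    reflectAtHit M (reflectAtHit M ω) = ω := by
  rw [reflectAtHit, reflectAtHit, hitTime_reflectFrom_hitTime hM, reflectFrom_reflectFrom]

end reflectAtHit

/-- The reflection principle: reflecting after the hitting time of `M` swaps the two sets. -/
theorem card_mem_visited_position_lt (M : ℤ) (hM : 0 ≤ M) :
    #{ω : Steps n | M ∈ visited ω ∧ position ω n < M} =
      #{ω : Steps n | M < position ω n} := by
  refine card_nbij' (reflectAtHit M) (reflectAtHit M) ?_ ?_ ?_ ?_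
  · intro ω hω
    simp only [coe_filter, mem_univ, true_and, Set.mem_ofPred_eq] at hω ⊢
    rw [position_reflectAtHit hω.1]
    linarith
  · intro ω hω
    simp only [coe_filter, mem_univ, true_and, Set.mem_ofPred_eq] at hω ⊢
    have hit := mem_visited_of_le_position hM le_rfl hω.le
    refine ⟨mem_visited_reflectAtHit hit, ?_⟩
    rw [position_reflectAtHit hit]
    linarith
  · intro ω hω
    simp only [coe_filter, mem_univ, true_and, Set.mem_ofPred_eq] at hω
    exact reflectAtHit_reflectAtHit hω.1
  · intro ω hω
    simp only [coe_filter, mem_univ, true_and, Set.mem_ofPred_eq] at hω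
    exact reflectAtHit_reflectAtHit (mem_visited_of_le_position hM le_rfl hω.le)

theorem card_mem_visited (M : ℤ) (hM : 0 ≤ M) :
    #{ω : Steps n | M ∈ visited ω} =
      #{ω : Steps n | M ≤ position ω n} + #{ω : Steps n | M < position ω n} := by
  rw [← card_mem_visited_position_lt M hM, add_comm,
    ← card_filter_add_card_filter_not (fun ω => position ω n < M), filter_filter, filter_filter]
  congr 2
  ext ω
  simp only [mem_filter, mem_univ, true_and, not_lt]
  exact ⟨fun h => h.2, fun h => ⟨mem_visited_of_le_position hM le_rfl h, h⟩⟩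

/-- `M` is the maximum of the walk exactly when `M` is visited but `M + 1` is not. -/
theorem card_max_eq (M : ℤ) (hM : 0 ≤ M) :
    #{ω : Steps n | M ∈ visited ω ∧ M + 1 ∉ visited ω} =
      #{ω : Steps n | position ω n = M ∨ position ω n = M + 1} := by
  have hsub : #{ω : Steps n | M ∈ visited ω} =
      #{ω : Steps n | M + 1 ∈ visited ω} +
        #{ω : Steps n | M ∈ visited ω ∧ M + 1 ∉ visited ω} := by
    rw [← card_filter_add_card_filter_not (fun ω => M + 1 ∈ visited ω), filter_filter,
      filter_filter]
    congr 2
    ext ω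
    simp only [mem_filter, mem_univ, true_and, and_iff_right_iff_imp]
    intro h
    obtain ⟨k, hk, hkM⟩ := mem_visited.1 h
    exact mem_visited_of_le_position hM hk (by omega)
  have hsplit : #{ω : Steps n | M ≤ position ω n} =
      #{ω : Steps n | M + 1 < position ω n} +
        #{ω : Steps n | position ω n = M ∨ position ω n = M + 1} := by
    rw [← card_filter_add_card_filter_not (fun ω => M + 1 < position ω n), filter_filter,
      filter_filter]
    congr 2 <;> ext ω <;> simp only [mem_filter, mem_univ, true_and] <;> omega
  have hcardM := card_mem_visited (n := n) M hM
  have hcardM1 := card_mem_visited (n := n) (M + 1) (by omega)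
  simp only [show ∀ x : ℤ, M + 1 ≤ x ↔ M < x from fun _ => Int.add_one_le_iff] at hcardM1
  omega

def numUpSteps (ω : Steps n) : ℕ := #{i | (ω i).2}

theorem position_eq_two_mul_numUpSteps_sub (ω : Steps n) :
    position ω n = 2 * numUpSteps ω - n := by
  have hall : univ.filter (fun i : Fin n => (i : ℕ) < n) = univ :=
    filter_true_of_mem fun i _ => i.2
  have hn : (n : ℤ) = ∑ _ : Fin n, 1 := by simp
  rw [position, hall, numUpSteps, card_filter, hn, Nat.cast_sum, mul_sum, ← sum_sub_distrib]
  refine sum_congr rfl fun i _ => ?_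
  cases h : (ω i).2 <;> simp [stepSign, h]

theorem card_numUpSteps_eq (t : ℕ) : #{ω : Steps n | numUpSteps ω = t} = n.choose t := by
  have hchoose := card_powersetCard t (univ : Finset (Fin n))
  rw [card_univ, Fintype.card_fin] at hchoose
  rw [← hchoose]
  refine card_nbij' (fun ω => ({i | (ω i).2} : Finset (Fin n))) (fun s i => (0, decide (i ∈ s)))
    ?_ ?_ ?_ ?_
  · intro ω hω
    rw [mem_coe, mem_filter] at hω
    rw [mem_coe, mem_powersetCard]
    exact ⟨subset_univ _, hω.2⟩
  · intro s hs
    rw [mem_coe, mem_powersetCard] at hs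
    rw [mem_coe, mem_filter, numUpSteps]
    simpa using hs.2
  · intro ω _
    funext i
    exact Prod.ext (Subsingleton.elim _ _) (by simp)
  · intro s _
    ext i
    simp

theorem card_position_eq_or_eq_add_one_le (M : ℤ) :
    #{ω : Steps n | position ω n = M ∨ position ω n = M + 1} ≤ n.choose (n / 2) := by
  calc _ ≤ #{ω : Steps n | numUpSteps ω = ((n + M + 1) / 2).toNat} := by
        refine card_le_card fun ω hω => ?_
        simp only [mem_filter, mem_univ, true_and, position_eq_two_mul_numUpSteps_sub] at hω ⊢
        omega
    _ = n.choose ((n + M + 1) / 2).toNat := card_numUpSteps_eq _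
    _ ≤ n.choose (n / 2) := Nat.choose_le_middle _ n

theorem card_fiber_rangeW_le (A : Finset (Fin 1 → ℤ)) :
    #{ω : Steps n | rangeW 0 ω = A} ≤ n.choose (n / 2) := by
  obtain hempty | ⟨ω₀, hω₀⟩ := (univ.filter fun ω : Steps n => rangeW 0 ω = A)
    |>.eq_empty_or_nonempty
  · simp [hempty]
  have hne : (visited ω₀).Nonempty := ⟨0, zero_mem_visited ω₀⟩
  set M := (visited ω₀).max' hne
  have hM : 0 ≤ M := le_max' _ _ (zero_mem_visited ω₀)
  calc _ ≤ #{ω : Steps n | M ∈ visited ω ∧ M + 1 ∉ visited ω} := by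
        refine card_le_card fun ω hω => ?_
        simp only [mem_filter, mem_univ, true_and] at hω hω₀ ⊢
        rw [rangeW_zero_eq_iff.1 (hω.trans hω₀.symm)]
        exact ⟨max'_mem _ _, fun h => by linarith [le_max' _ _ h]⟩
    _ = #{ω : Steps n | position ω n = M ∨ position ω n = M + 1} := card_max_eq M hM
    _ ≤ n.choose (n / 2) := card_position_eq_or_eq_add_one_le M

theorem prW_fiber_rangeW_le (hn : 0 < n) (A : Finset (Fin 1 → ℤ)) :
    prW 1 n {ω | rangeW 0 ω = A} ≤ (√n)⁻¹ := by
  rw [prW_fiber_eq, Nat.cast_one, mul_one, div_le_iff₀ (by positivity), inv_mul_eq_div]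
  exact (Nat.cast_le.2 (card_fiber_rangeW_le A)).trans (Nat.choose_half_le_two_pow_div_sqrt hn)

end SRW

/-- For `d = 1`, the entropy of the range of `n`-step SRW on `ℤ` is of order `log n`. -/
theorem entropy_range_one_dim :
    ∃ c C : ℝ, 0 < c ∧ 0 < C ∧ ∀ n : ℕ, 2 ≤ n →
      c * Real.log n ≤ entW 1 n (rangeW (0 : Fin 1 → ℤ)) ∧
      entW 1 n (rangeW (0 : Fin 1 → ℤ)) ≤ C * Real.log n := by
  have hlog2 : 0 < log 2 := log_pos one_lt_two
  refine ⟨(2 * log 2)⁻¹, 4 / log 2, by positivity, by positivity, fun n hn => ⟨?_, ?_⟩⟩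
  · calc (2 * log 2)⁻¹ * log n = logb 2 √n := by
          rw [logb, log_sqrt n.cast_nonneg]; ring
      _ ≤ entW 1 n (rangeW 0) := logb_le_entW one_pos _ (SRW.prW_fiber_rangeW_le (by omega))
  · have hcard : (#(univ.image (rangeW 0 : SRW.Steps n → _)) : ℝ) ≤ (n : ℝ) ^ 4 := by
      have hsq : (n + 1) ^ 2 ≤ n ^ 4 :=
        (Nat.pow_le_pow_left (by nlinarith) 2).trans_eq (by ring : (n * n) ^ 2 = n ^ 4)
      exact_mod_cast SRW.card_image_rangeW_le.trans hsq
    calc entW 1 n (rangeW 0) ≤ logb 2 #(univ.image (rangeW 0 : SRW.Steps n → _)) :=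
          entW_le_logb_card one_pos _
      _ ≤ logb 2 ((n : ℝ) ^ 4) :=
          logb_le_logb_of_le one_lt_two (by simp) hcard
      _ = 4 / log 2 * log n := by rw [logb, log_pow]; ring
end

section
/- For simple random walk on ℤ^d (d ≥ 1) started at the origin and any finite set A ⊂ ℤ^d, the probability that the range of the n-step walk equals A satisfies P[R(n) = A] ≤ (1 − 1/(2d))^{|∂A| − 1}, where |∂A| is the cardinality of the inner boundary of A. -/
open Real

/-! Give the step sequence `ω` the weight `W ω = ∏ₛ v (S s) (ω s)`, where a step leaving `A` has
weight `0`, a step from a point of `∂A` staying in `A` has weight `t = 2d / (2d - 1)`, and every other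
step has weight `1`. A point of `∂A` has at most `2d - 1` steps staying in `A`, so the weights of
the `2d` steps from any point sum to at most `2d`, and peeling off the first step gives
`E[W] ≤ 1`. On `{R(n) = A}` no step leaves `A` and the walk sits on `∂A` at least `|∂A| - 1`
times before time `n`, so `W ≥ t ^ (|∂A| - 1)` there; Markov's inequality concludes, as
`1 / t = 1 - 1 / (2d)`. -/

section Walk

variable {d n : ℕ} (z : Fin d → ℤ) (ω : Fin n → Fin d × Bool)

lemma walk_zero : walk z ω 0 = z := by
  simp [walk]

lemma walk_cons (a : Fin d × Bool) (k : ℕ) :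
    walk z (Fin.cons a ω) (k + 1) = walk (z + step a) ω k := by
  simp [walk, Finset.sum_filter, Fin.sum_univ_succ, add_assoc]

lemma walk_succ (s : Fin n) : walk z ω (s + 1) = walk z ω s + step (ω s) := by
  have split : ∀ i : Fin n, (if (i : ℕ) < s + 1 then step (ω i) else 0) =
      (if (i : ℕ) < s then step (ω i) else 0) + if s = i then step (ω i) else 0 := by
    intro i
    rcases lt_trichotomy (i : ℕ) s with h | h | h
    · simp [h, h.trans (Nat.lt_succ_self _), (Fin.ne_of_lt h).symm]
    · simp [Fin.ext h]
    · simp [show ¬(i : ℕ) < s + 1 by omega, h.not_gt, Fin.ne_of_lt h]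
  simp only [walk, Finset.sum_filter, split, Finset.sum_add_distrib, Finset.sum_ite_eq,
    Finset.mem_univ, if_true, add_assoc]

lemma walk_mem_rangeW {k : ℕ} (hk : k ≤ n) : walk z ω k ∈ rangeW z ω :=
  Finset.mem_image_of_mem _ (Finset.mem_range.mpr (Nat.lt_succ_of_le hk))

lemma card_le_card_filter_walk_mem_add_one {B : Finset (Fin d → ℤ)} (hB : B ⊆ rangeW z ω) :
    B.card ≤ (Finset.univ.filter fun s : Fin n => walk z ω s ∈ B).card + 1 := by
  have hcover : B ⊆ insert (walk z ω n)
      ((Finset.univ.filter fun s : Fin n => walk z ω s ∈ B).image fun s : Fin n => walk z ω s) := by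
    intro x hx
    obtain ⟨k, hk, rfl⟩ := Finset.mem_image.mp (hB hx)
    rcases (Nat.lt_succ_iff.mp (Finset.mem_range.mp hk)).lt_or_eq with hk | rfl
    · exact Finset.mem_insert_of_mem (Finset.mem_image.mpr ⟨⟨k, hk⟩, by simpa using hx, rfl⟩)
    · exact Finset.mem_insert_self _ _
  exact (Finset.card_le_card hcover).trans
    ((Finset.card_insert_le _ _).trans (Nat.add_le_add_right Finset.card_image_le 1))

end Walk

theorem sum_prod_walk_le_pow {R : Type*} [CommSemiring R] [PartialOrder R] [IsOrderedRing R]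
    {d : ℕ} (v : (Fin d → ℤ) → Fin d × Bool → R) {c : R} (hv₀ : ∀ x a, 0 ≤ v x a)
    (hv : ∀ x, ∑ a, v x a ≤ c) (n : ℕ) (z : Fin d → ℤ) :
    ∑ ω : Fin n → Fin d × Bool, ∏ s : Fin n, v (walk z ω s) (ω s) ≤ c ^ n := by
  induction n generalizing z with
  | zero => simp
  | succ n ih =>
    have hc : 0 ≤ c := (Finset.sum_nonneg fun a _ => hv₀ z a).trans (hv z)
    calc ∑ ω : Fin (n + 1) → Fin d × Bool, ∏ s : Fin (n + 1), v (walk z ω s) (ω s)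
        = ∑ a, v z a * ∑ ω : Fin n → Fin d × Bool,
            ∏ s : Fin n, v (walk (z + step a) ω s) (ω s) := by
          rw [← (Fin.consEquiv fun _ => Fin d × Bool).sum_comp, Fintype.sum_prod_type]
          simp only [Fin.consEquiv, Equiv.coe_fn_mk, Fin.prod_univ_succ, Fin.cons_zero,
            Fin.cons_succ, Fin.val_zero, Fin.val_succ, walk_zero, walk_cons, Finset.mul_sum]
      _ ≤ ∑ a, v z a * c ^ n := by gcongr with a; exacts [hv₀ z a, ih _]
      _ ≤ c ^ (n + 1) := by rw [← Finset.sum_mul, pow_succ']; gcongr; exact hv z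

lemma innerBdry_subset {d : ℕ} (A : Finset (Fin d → ℤ)) : innerBdry A ⊆ A :=
  Finset.filter_subset _ A

section BoundaryWeight

variable {d : ℕ} (A : Finset (Fin d → ℤ)) (t : ℝ)

def boundaryWeight (x : Fin d → ℤ) (a : Fin d × Bool) : ℝ :=
  if x + step a ∈ A then (if x ∈ innerBdry A then t else 1) else 0

lemma boundaryWeight_nonneg (ht : 0 ≤ t) (x : Fin d → ℤ) (a : Fin d × Bool) :
    0 ≤ boundaryWeight A t x a := by
  unfold boundaryWeight; split_ifs <;> linarith

lemma sum_boundaryWeight_le (ht : 0 ≤ t) (ht' : (2 * d - 1) * t ≤ 2 * d) (x : Fin d → ℤ) :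
    ∑ a, boundaryWeight A t x a ≤ 2 * d := by
  have hcard : (Finset.univ : Finset (Fin d × Bool)).card = 2 * d := by
    simp [mul_comm]
  set stay := Finset.univ.filter fun a : Fin d × Bool => x + step a ∈ A
  have hsum : ∑ a, boundaryWeight A t x a = stay.card * (if x ∈ innerBdry A then t else 1) := by
    simp only [boundaryWeight, ← Finset.sum_filter, Finset.sum_const, nsmul_eq_mul, stay]
  rw [hsum]
  split_ifs with hx
  · obtain ⟨a, ha⟩ := (Finset.mem_filter.mp hx).2
    have hlt : stay.card < 2 * d := hcard ▸ Finset.card_lt_card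
      (Finset.filter_ssubset.mpr ⟨a, Finset.mem_univ a, ha⟩)
    have : (stay.card : ℝ) + 1 ≤ 2 * d := by exact_mod_cast hlt
    nlinarith
  · have : stay.card ≤ 2 * d := hcard ▸ Finset.card_le_univ stay
    simpa using (by exact_mod_cast this : (stay.card : ℝ) ≤ 2 * d)

lemma prod_boundaryWeight_walk {n : ℕ} {z : Fin d → ℤ} {ω : Fin n → Fin d × Bool}
    (hω : rangeW z ω ⊆ A) :
    ∏ s : Fin n, boundaryWeight A t (walk z ω s) (ω s) =
      t ^ (Finset.univ.filter fun s : Fin n => walk z ω s ∈ innerBdry A).card := by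
  have hfactor : ∀ s : Fin n, boundaryWeight A t (walk z ω s) (ω s) =
      if walk z ω s ∈ innerBdry A then t else 1 := fun s => by
    rw [boundaryWeight, ← walk_succ, if_pos (hω (walk_mem_rangeW z ω s.isLt))]
  simp only [hfactor, ← Finset.prod_filter, Finset.prod_const]

end BoundaryWeight

lemma prW_le_exW_div {d n : ℕ} (E : Set (Fin n → Fin d × Bool))
    (W : (Fin n → Fin d × Bool) → ℝ) {m : ℝ} (hm : 0 < m) (hW : ∀ ω, 0 ≤ W ω)
    (hE : ∀ ω ∈ E, m ≤ W ω) : prW d n E ≤ exW d n W / m := by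
  classical
  have hmass : (E.ncard : ℝ) * m ≤ ∑ ω, W ω := calc
    (E.ncard : ℝ) * m = ∑ _ω ∈ E.toFinset, m := by
      rw [Finset.sum_const, nsmul_eq_mul, Set.ncard_eq_toFinset_card']
    _ ≤ ∑ ω ∈ E.toFinset, W ω := Finset.sum_le_sum fun ω hω => hE ω (Set.mem_toFinset.mp hω)
    _ ≤ ∑ ω, W ω := Finset.sum_le_sum_of_subset_of_nonneg (Finset.subset_univ _)
      fun ω _ _ => hW ω
  rw [prW, exW, div_right_comm]
  gcongr
  rwa [le_div_iff₀ hm]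

/-- `P[R(n) = A] ≤ (1 - 1/(2d))^(|∂A| - 1)` for SRW on `ℤ^d` started at the origin. -/
theorem prob_range_eq_le :
    ∀ d : ℕ, 1 ≤ d → ∀ n : ℕ, ∀ A : Finset (Fin d → ℤ),
      prW d n {ω | rangeW (0 : Fin d → ℤ) ω = A} ≤
        (1 - 1 / (2 * (d : ℝ))) ^ ((innerBdry A).card - 1) := by
  intro d hd n A
  have h2d : (0 : ℝ) < 2 * d - 1 := by
    have : (1 : ℝ) ≤ d := by exact_mod_cast hd
    linarith
  set t : ℝ := 2 * d / (2 * d - 1)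
  have ht : (2 * d - 1) * t = 2 * d := mul_div_cancel₀ _ h2d.ne'
  have ht₁ : 1 ≤ t := by rw [le_div_iff₀ h2d]; linarith
  set W := fun ω : Fin n → Fin d × Bool => ∏ s : Fin n, boundaryWeight A t (walk 0 ω s) (ω s)
  have hexW : exW d n W ≤ 1 := by
    rw [exW, div_le_one (by positivity)]
    exact sum_prod_walk_le_pow _ (boundaryWeight_nonneg A t (by linarith))
      (sum_boundaryWeight_le A t (by linarith) ht.le) n 0
  have hW : ∀ ω ∈ {ω | rangeW 0 ω = A}, t ^ ((innerBdry A).card - 1) ≤ W ω := by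
    intro ω (hω : rangeW 0 ω = A)
    rw [show W ω = _ from prod_boundaryWeight_walk A t hω.le]
    have := card_le_card_filter_walk_mem_add_one 0 ω ((innerBdry_subset A).trans hω.ge)
    exact pow_le_pow_right₀ ht₁ (by omega)
  calc prW d n {ω | rangeW 0 ω = A}
      ≤ exW d n W / t ^ ((innerBdry A).card - 1) :=
        prW_le_exW_div _ W (by positivity) (fun ω => Finset.prod_nonneg fun s _ =>
          boundaryWeight_nonneg A t (by linarith) _ _) hW
    _ ≤ 1 / t ^ ((innerBdry A).card - 1) := by gcongr
    _ = (1 - 1 / (2 * (d : ℝ))) ^ ((innerBdry A).card - 1) := by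
      rw [one_div, ← inv_pow]; congr 1; simp only [t]; field_simp
end

section
/- Let k, ℓ, n ∈ ℕ and set k′ = (2ℓ+1)k + ℓ. For the simple random walk on ℤ² started at the origin, the conditional Shannon entropy of the boundary-indicator vector at scale k given the vector at scale k′ satisfies H( ∂(k,n) | ∂(k′,n) ) ≤ E[ M(k′,n) ] · (2ℓ+1)². -/
open Real

/-- The square `Q(z,k) = {z + (j,j′) : −k ≤ j, j′ ≤ k}` of side length `2k+1` centered at `z`. -/
def square (z : Fin 2 → ℤ) (k : ℕ) : Set (Fin 2 → ℤ) :=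
  {w | ∀ i, |w i - z i| ≤ (k : ℤ)}

/-- The lattice `Λ(k) = (2k+1)·ℤ²` of centers of the squares tiling `ℤ²`. -/
def lat (k : ℕ) : Set (Fin 2 → ℤ) :=
  {z | ∃ w : Fin 2 → ℤ, z = (2 * (k : ℤ) + 1) • w}

/-- `M(k,n)`: the number of squares `Q(z,k)`, `z ∈ Λ(k)`, meeting the inner boundary
`∂R(n)` of the range of the `n`-step walk started at the origin. -/
noncomputable def Mnum (k n : ℕ) (ω : Fin n → Fin 2 × Bool) : ℕ :=
  {z | z ∈ lat k ∧ ∃ x ∈ innerBdry (rangeW (0 : Fin 2 → ℤ) ω), x ∈ square z k}.ncard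

/-- Conditional Shannon entropy `H(X|Y) = H(X,Y) - H(Y)` (base 2). -/
noncomputable def condEntW {α β : Type*} (d n : ℕ) (X : (Fin n → Fin d × Bool) → α)
    (Y : (Fin n → Fin d × Bool) → β) : ℝ :=
  entW d n (fun ω => (X ω, Y ω)) - entW d n Y

/-- The boundary-indicator vector `∂(k,n)` at scale `k`: the (random) set of centers
`z ∈ Λ(k) ∩ [-2n,2n]²` whose square `Q(z,k)` meets `∂R(n)`; this record of indicators is
indexed by `Λ(k) ∩ [-2n,2n]²`. -/
def bvec (k n : ℕ) (ω : Fin n → Fin 2 × Bool) : Set (Fin 2 → ℤ) :=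
  {z | z ∈ lat k ∧ (∀ i, |z i| ≤ 2 * (n : ℤ)) ∧
    ∃ x ∈ innerBdry (rangeW (0 : Fin 2 → ℤ) ω), x ∈ square z k}

/-!
Given `∂(k′,n)`, the vector `∂(k,n)` is confined to few values. Rounding the centre of a
scale-`k` square to the nearest point of `Λ(k′) ⊆ Λ(k)` moves it by at most `(2k+1)ℓ = k′ - k`,
so every square `Q(z,k)` meeting `∂R(n)` lies in a square `Q(z′,k′)` meeting `∂R(n)`, and each
`Q(z′,k′)` contains exactly `(2ℓ+1)²` points of `Λ(k)`. Hence `∂(k,n)` is a subset of a set of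
size `(2ℓ+1)² M(k′,n)` determined by `∂(k′,n)` (the box `[-2n,2n]²` cuts nothing off, as the
walk stays in `[-n,n]²`), so it takes at most `2^((2ℓ+1)² M(k′,n))` values on each fibre of
`∂(k′,n)`. By Jensen's inequality on each fibre, `H(X|Y)` is at most the expected `log₂` of the
number of values `X` takes on the fibre of `Y`.
-/

open Finset

namespace Finset

variable {Ω ι : Type*} [DecidableEq ι]

theorem sum_inv_card_filter_eq_card_image (s : Finset Ω) (f : Ω → ι) :
    ∑ ω ∈ s, ((#{ω' ∈ s | f ω' = f ω} : ℕ) : ℝ)⁻¹ = #(s.image f) := by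
  rw [sum_comp (fun a => ((#{ω' ∈ s | f ω' = a} : ℕ) : ℝ)⁻¹) f, card_eq_sum_ones,
    Nat.cast_sum]
  refine sum_congr rfl fun a ha => ?_
  obtain ⟨ω, hω, rfl⟩ := mem_image.1 ha
  have : (0 : ℝ) < #{ω' ∈ s | f ω' = f ω} := by
    exact_mod_cast card_pos.2 ⟨ω, by simp [hω]⟩
  rw [nsmul_eq_mul, mul_inv_cancel₀ this.ne', Nat.cast_one]

theorem sum_logb_card_div_card_filter_le (s : Finset Ω) (f : Ω → ι) :
    ∑ ω ∈ s, logb 2 (#s / #{ω' ∈ s | f ω' = f ω}) ≤ #s * logb 2 #(s.image f) := by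
  rcases s.eq_empty_or_nonempty with rfl | hs
  · simp
  have hcard : (0 : ℝ) < #s := by exact_mod_cast hs.card_pos
  have hfiber : ∀ ω ∈ s, (0 : ℝ) < #{ω' ∈ s | f ω' = f ω} := fun ω hω => by
    exact_mod_cast card_pos.2 ⟨ω, by simp [hω]⟩
  have hconcave : ConcaveOn ℝ (Set.Ioi 0) (logb 2) := by
    have : logb 2 = fun x => (log 2)⁻¹ • log x := by
      ext x; rw [smul_eq_mul, ← div_eq_inv_mul]; rfl
    exact this ▸ strictConcaveOn_log_Ioi.concaveOn.smul (by positivity)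
  have jensen := hconcave.le_map_sum
    (t := s) (w := fun _ => (#s : ℝ)⁻¹) (p := fun ω => (#s : ℝ) / #{ω' ∈ s | f ω' = f ω})
    (fun _ _ => by positivity) (by simp [hcard.ne'])
    (fun ω hω => Set.mem_Ioi.2 (div_pos hcard (hfiber ω hω)))
  simp only [smul_eq_mul, ← mul_sum] at jensen
  have hsum : ∑ ω ∈ s, (#s : ℝ) / #{ω' ∈ s | f ω' = f ω} = #s * #(s.image f) := by
    simp_rw [div_eq_mul_inv, ← mul_sum, sum_inv_card_filter_eq_card_image]
  rw [hsum, inv_mul_cancel_left₀ hcard.ne'] at jensen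
  rwa [inv_mul_le_iff₀ hcard] at jensen

theorem card_le_two_pow_ncard_of_forall_subset {γ : Type*} {V : Finset (Set γ)} {S : Set γ}
    (hS : S.Finite) (hV : ∀ A ∈ V, A ⊆ S) : #V ≤ 2 ^ S.ncard := by
  rw [← Set.ncard_coe_finset, ← Set.ncard_powerset S hS]
  exact Set.ncard_le_ncard hV hS.powerset

end Finset

section Entropy

variable {d n : ℕ} {α β : Type*}

theorem exW_mono {f g : (Fin n → Fin d × Bool) → ℝ} (hfg : ∀ ω, f ω ≤ g ω) :
    exW d n f ≤ exW d n g := by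
  unfold exW
  gcongr with ω
  exact hfg ω

theorem exW_mul_const (f : (Fin n → Fin d × Bool) → ℝ) (c : ℝ) :
    exW d n (fun ω => f ω * c) = exW d n f * c := by
  simp only [exW, ← sum_mul, div_mul_eq_mul_div]

theorem entW_eq_sum [DecidableEq α] (X : (Fin n → Fin d × Bool) → α) :
    entW d n X = -(∑ ω, logb 2 (#{ω' | X ω' = X ω} / (2 * d : ℝ) ^ n)) / (2 * d) ^ n := by
  have hprW : ∀ a, prW d n {ω | X ω = a} = #{ω | X ω = a} / (2 * d : ℝ) ^ n := fun a => by
    rw [prW, ← Set.ncard_coe_finset, coe_filter]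
    simp only [mem_univ, true_and]
  rw [entW, tsum_eq_sum (s := univ.image X),
    sum_comp (fun a => logb 2 (#{ω | X ω = a} / (2 * d : ℝ) ^ n)) X, neg_div, sum_div,
    ← sum_neg_distrib]
  · refine sum_congr rfl fun a _ => ?_
    rw [hprW, nsmul_eq_mul]
    ring
  · intro a ha
    rw [hprW, filter_eq_empty_iff.2 fun ω _ hω => ha (mem_image.2 ⟨ω, mem_univ ω, hω⟩)]
    simp

theorem condEntW_eq_sum [DecidableEq α] [DecidableEq β] (X : (Fin n → Fin d × Bool) → α)
    (Y : (Fin n → Fin d × Bool) → β) :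
    condEntW d n X Y = (∑ ω, logb 2
      (#{ω' | Y ω' = Y ω} / #{ω' | (X ω', Y ω') = (X ω, Y ω)})) / (2 * d : ℝ) ^ n := by
  rw [condEntW, entW_eq_sum, entW_eq_sum, neg_div, neg_div, neg_sub_neg, ← sub_div,
    ← sum_sub_distrib]
  congr 1
  refine sum_congr rfl fun ω _ => ?_
  have hcard : (2 * d : ℝ) ^ n ≠ 0 := by
    have : (Fintype.card (Fin n → Fin d × Bool) : ℝ) = (2 * d) ^ n := by
      simp [mul_comm]
    exact this ▸ Nat.cast_ne_zero.2 (Fintype.card_pos_iff.2 ⟨ω⟩).ne'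
  have hfiber : ∀ s : Finset (Fin n → Fin d × Bool), ω ∈ s → (#s : ℝ) ≠ 0 := fun s hs => by
    exact_mod_cast (card_pos.2 ⟨ω, hs⟩).ne'
  rw [logb_div (hfiber _ ?_) hcard, logb_div (hfiber _ ?_) hcard,
    logb_div (hfiber _ ?_) (hfiber _ ?_)]
  · ring
  all_goals simp

theorem condEntW_le_exW_logb_card_image [DecidableEq α] [DecidableEq β]
    (X : (Fin n → Fin d × Bool) → α) (Y : (Fin n → Fin d × Bool) → β) :
    condEntW d n X Y ≤ exW d n (fun ω => logb 2 #(image X {ω' | Y ω' = Y ω})) := by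
  rw [condEntW_eq_sum, exW]
  refine div_le_div_of_nonneg_right ?_ (by positivity)
  have hY : ∀ ω ∈ (univ : Finset (Fin n → Fin d × Bool)), Y ω ∈ univ.image Y :=
    fun ω _ => mem_image_of_mem Y (mem_univ ω)
  rw [← sum_fiberwise_of_maps_to hY, ← sum_fiberwise_of_maps_to hY]
  refine sum_le_sum fun b _ => ?_
  set F : Finset (Fin n → Fin d × Bool) := {ω | Y ω = b}
  calc _ = ∑ ω ∈ F, logb 2 (#F / #{ω' ∈ F | X ω' = X ω}) := by
        refine sum_congr rfl fun ω hω => ?_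
        rw [(mem_filter.1 hω).2, filter_filter]
        simp_rw [Prod.ext_iff, and_comm]
        rfl
    _ ≤ #F * logb 2 #(F.image X) := sum_logb_card_div_card_filter_le F X
    _ = _ := by
        rw [← nsmul_eq_mul, ← sum_const]
        exact sum_congr rfl fun ω hω => by rw [(mem_filter.1 hω).2]

end Entropy

theorem abs_step_le_one {d : ℕ} (a : Fin d × Bool) (i : Fin d) : |step a i| ≤ 1 := by
  unfold step
  split_ifs <;> simp

theorem abs_le_of_mem_rangeW {d n : ℕ} {ω : Fin n → Fin d × Bool} {x : Fin d → ℤ}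
    (hx : x ∈ rangeW 0 ω) (i : Fin d) : |x i| ≤ n := by
  obtain ⟨j, -, rfl⟩ := mem_image.1 hx
  simp only [walk, zero_add, Finset.sum_apply]
  calc _ ≤ ∑ t ∈ univ.filter (fun t : Fin n => (t : ℕ) < j), |step (ω t) i| :=
        abs_sum_le_sum_abs _ _
    _ ≤ #(univ.filter fun t : Fin n => (t : ℕ) < j) • 1 :=
        sum_le_card_nsmul _ _ _ fun t _ => abs_step_le_one _ _
    _ ≤ n := by
        rw [nsmul_one, Nat.cast_le]
        exact (card_filter_le _ _).trans (card_fin n).le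

theorem mem_square_self (z : Fin 2 → ℤ) (k : ℕ) : z ∈ square z k := fun i => by simp

theorem square_finite (z : Fin 2 → ℤ) (k : ℕ) : (square z k).Finite :=
  (Set.finite_Icc (fun i => z i - k) (fun i => z i + k)).subset fun _ hw =>
    ⟨fun i => by linarith [abs_le.1 (hw i)], fun i => by linarith [abs_le.1 (hw i)]⟩

theorem square_subset_square {z z' : Fin 2 → ℤ} {k k' : ℕ} (h : ∀ i, |z i - z' i| + k ≤ k') :
    square z k ⊆ square z' k' := fun x hx i =>
  calc |x i - z' i| ≤ |x i - z i| + |z i - z' i| := abs_sub_le _ _ _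
    _ ≤ k' := by linarith [hx i, h i]

theorem abs_le_two_mul_of_mem_square {k n : ℕ} {z x : Fin 2 → ℤ} (hz : z ∈ lat k)
    (hx : x ∈ square z k) (hxn : ∀ i, |x i| ≤ n) (i : Fin 2) : |z i| ≤ 2 * n := by
  have hzx : |z i| ≤ n + k := by
    linarith [abs_sub_abs_le_abs_sub (z i) (x i), abs_sub_comm (z i) (x i), hx i, hxn i]
  obtain ⟨w, rfl⟩ := hz
  rcases eq_or_ne (w i) 0 with hw | hw
  · simp [hw]
  · have : 2 * (k : ℤ) + 1 ≤ |((2 * (k : ℤ) + 1) • w) i| := by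
      rw [Pi.smul_apply, smul_eq_mul, abs_mul, abs_of_pos (by positivity)]
      exact le_mul_of_one_le_right (by positivity) (Int.one_le_abs hw)
    omega

theorem bvec_finite (k n : ℕ) (ω : Fin n → Fin 2 × Bool) : (bvec k n ω).Finite :=
  (square_finite 0 (2 * n)).subset fun _ hz i => by simpa using hz.2.1 i

theorem ncard_bvec_eq_Mnum (k n : ℕ) (ω : Fin n → Fin 2 × Bool) :
    (bvec k n ω).ncard = Mnum k n ω := by
  rw [Mnum]
  congr 1
  ext z
  refine ⟨fun ⟨hz, _, hbd⟩ => ⟨hz, hbd⟩, fun ⟨hz, x, hx, hxz⟩ => ⟨hz, ?_, x, hx, hxz⟩⟩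
  exact abs_le_two_mul_of_mem_square hz hxz (abs_le_of_mem_rangeW (mem_filter.1 hx).1)

theorem exists_mem_lat_abs_sub_le (k l : ℕ) {z : Fin 2 → ℤ} (hz : z ∈ lat k) :
    ∃ z' ∈ lat ((2 * l + 1) * k + l), ∀ i, |z i - z' i| + k ≤ ((2 * l + 1) * k + l : ℕ) := by
  obtain ⟨w, rfl⟩ := hz
  -- `q i` is `w i / (2l+1)` rounded to the nearest integer
  set q : Fin 2 → ℤ := fun i => (w i + l) / (2 * l + 1)
  refine ⟨(2 * (((2 * l + 1) * k + l : ℕ) : ℤ) + 1) • q, ⟨q, rfl⟩, fun i => ?_⟩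
  have hrem : |w i - (2 * l + 1) * q i| ≤ l := by
    have := Int.mul_ediv_add_emod (w i + l) (2 * l + 1)
    have := Int.emod_nonneg (w i + l) (by omega : (2 * (l : ℤ) + 1) ≠ 0)
    have := Int.emod_lt_of_pos (w i + l) (by omega : (0 : ℤ) < 2 * l + 1)
    rw [abs_le]
    simp only [q]
    omega
  have hdiff : ((2 * (k : ℤ) + 1) • w) i - ((2 * (((2 * l + 1) * k + l : ℕ) : ℤ) + 1) • q) i
      = (2 * k + 1) * (w i - (2 * l + 1) * q i) := by
    simp only [Pi.smul_apply, smul_eq_mul]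
    push_cast
    ring
  rw [hdiff, abs_mul, abs_of_pos (by positivity)]
  push_cast
  nlinarith

theorem bvec_subset_biUnion (k l n : ℕ) (ω : Fin n → Fin 2 × Bool) :
    bvec k n ω ⊆ ⋃ z' ∈ bvec ((2 * l + 1) * k + l) n ω,
      lat k ∩ square z' ((2 * l + 1) * k + l) := by
  rintro z ⟨hz, -, x, hx, hxz⟩
  obtain ⟨z', hz', hzz'⟩ := exists_mem_lat_abs_sub_le k l hz
  have hsub := square_subset_square hzz'
  refine Set.mem_biUnion ⟨hz', ?_, x, hx, hsub hxz⟩ ⟨hz, hsub (mem_square_self z k)⟩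
  exact abs_le_two_mul_of_mem_square hz' (hsub hxz) (abs_le_of_mem_rangeW (mem_filter.1 hx).1)

theorem abs_sub_le_of_smul_mem_square (k l : ℕ) {w w' : Fin 2 → ℤ}
    (h : (2 * (k : ℤ) + 1) • w ∈
      square ((2 * (((2 * l + 1) * k + l : ℕ) : ℤ) + 1) • w') ((2 * l + 1) * k + l))
    (i : Fin 2) : |w i - (2 * l + 1) * w' i| ≤ l := by
  have hi := h i
  have hdiff : ((2 * (k : ℤ) + 1) • w) i - ((2 * (((2 * l + 1) * k + l : ℕ) : ℤ) + 1) • w') i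
      = (2 * k + 1) * (w i - (2 * l + 1) * w' i) := by
    simp only [Pi.smul_apply, smul_eq_mul]
    push_cast
    ring
  rw [hdiff, abs_mul, abs_of_pos (by positivity)] at hi
  push_cast at hi
  by_contra! hfar
  nlinarith

theorem ncard_lat_inter_square_le (k l : ℕ) {z' : Fin 2 → ℤ}
    (hz' : z' ∈ lat ((2 * l + 1) * k + l)) :
    (lat k ∩ square z' ((2 * l + 1) * k + l)).ncard ≤ (2 * l + 1) ^ 2 := by
  obtain ⟨w', rfl⟩ := hz'
  set T : Finset (Fin 2 → ℤ) :=
    Icc (fun i => (2 * l + 1) * w' i - l) (fun i => (2 * l + 1) * w' i + l)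
  have hsub : lat k ∩ square ((2 * (((2 * l + 1) * k + l : ℕ) : ℤ) + 1) • w') ((2 * l + 1) * k + l)
      ⊆ (fun w => (2 * (k : ℤ) + 1) • w) '' T := by
    rintro _ ⟨⟨w, rfl⟩, hsq⟩
    have hnear := abs_sub_le_of_smul_mem_square k l hsq
    refine ⟨w, ?_, rfl⟩
    simp only [T, coe_Icc, Set.mem_Icc]
    exact ⟨fun i => by linarith [abs_le.1 (hnear i)], fun i => by linarith [abs_le.1 (hnear i)]⟩
  have hT : #T = (2 * l + 1) ^ 2 := by
    simp only [T, Pi.card_Icc, Int.card_Icc, Fin.prod_univ_two]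
    rw [sq]
    congr 1 <;> omega
  calc _ ≤ ((fun w => (2 * (k : ℤ) + 1) • w) '' T).ncard :=
        Set.ncard_le_ncard hsub (T.finite_toSet.image _)
    _ ≤ (T : Set (Fin 2 → ℤ)).ncard := Set.ncard_image_le T.finite_toSet
    _ = (2 * l + 1) ^ 2 := by rw [Set.ncard_coe_finset, hT]

theorem ncard_biUnion_lat_inter_square_le (k l n : ℕ) (ω : Fin n → Fin 2 × Bool) :
    (⋃ z' ∈ bvec ((2 * l + 1) * k + l) n ω, lat k ∩ square z' ((2 * l + 1) * k + l)).ncard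
      ≤ (2 * l + 1) ^ 2 * (bvec ((2 * l + 1) * k + l) n ω).ncard := by
  have hB := bvec_finite ((2 * l + 1) * k + l) n ω
  calc _ = (⋃ z' ∈ hB.toFinset, lat k ∩ square z' ((2 * l + 1) * k + l)).ncard := by
        simp only [Set.Finite.mem_toFinset]
    _ ≤ ∑ z' ∈ hB.toFinset, (lat k ∩ square z' ((2 * l + 1) * k + l)).ncard :=
        hB.toFinset.set_ncard_biUnion_le _
    _ ≤ ∑ _z' ∈ hB.toFinset, (2 * l + 1) ^ 2 :=
        sum_le_sum fun z' hz' => ncard_lat_inter_square_le k l (hB.mem_toFinset.1 hz').1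
    _ = _ := by rw [sum_const, smul_eq_mul, ← Set.ncard_eq_toFinset_card _ hB, mul_comm]

theorem card_image_bvec_fiber_le [DecidableEq (Set (Fin 2 → ℤ))] (k l n : ℕ)
    (ω : Fin n → Fin 2 × Bool) :
    #(image (bvec k n) {ω' | bvec ((2 * l + 1) * k + l) n ω' = bvec ((2 * l + 1) * k + l) n ω})
      ≤ 2 ^ ((2 * l + 1) ^ 2 * Mnum ((2 * l + 1) * k + l) n ω) := by
  rw [← ncard_bvec_eq_Mnum]
  refine (card_le_two_pow_ncard_of_forall_subset ?_ ?_).trans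
    (Nat.pow_le_pow_right two_pos (ncard_biUnion_lat_inter_square_le k l n ω))
  · exact (bvec_finite _ n ω).biUnion fun z' _ => (square_finite z' _).subset Set.inter_subset_right
  · intro A hA
    obtain ⟨ω', hω', rfl⟩ := mem_image.1 hA
    exact (mem_filter.1 hω').2 ▸ bvec_subset_biUnion k l n ω'

/-- `H(∂(k,n) | ∂(k′,n)) ≤ E[M(k′,n)] · (2ℓ+1)²` where `k′ = (2ℓ+1)k + ℓ`. -/
theorem cond_entropy_scales :
    ∀ k l n : ℕ,
      condEntW 2 n (bvec k n) (bvec ((2 * l + 1) * k + l) n) ≤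
        exW 2 n (fun ω => (Mnum ((2 * l + 1) * k + l) n ω : ℝ)) * (2 * l + 1) ^ 2 := by
  classical
  intro k l n
  refine (condEntW_le_exW_logb_card_image _ _).trans ?_
  rw [← exW_mul_const]
  refine exW_mono fun ω => ?_
  have hcard : 0 < #(image (bvec k n)
      {ω' | bvec ((2 * l + 1) * k + l) n ω' = bvec ((2 * l + 1) * k + l) n ω}) :=
    card_pos.2 ⟨bvec k n ω, mem_image_of_mem _ (by simp)⟩
  calc _ ≤ logb 2 ((2 : ℝ) ^ ((2 * l + 1) ^ 2 * Mnum ((2 * l + 1) * k + l) n ω)) :=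
        logb_le_logb_of_le one_lt_two (by exact_mod_cast hcard)
          (by exact_mod_cast card_image_bvec_fiber_le k l n ω)
    _ = _ := by
        rw [logb_pow, logb_self_eq_one one_lt_two]
        push_cast
        ring
end
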